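/- arXiv:1905.11434 — 2 statements merged into one kernel-verified Lean document; each statement's English description precedes it below -/
import Mathlib

section
/- If P(Y=1, M=0 | X=1) + P(Y=0, M=0 | X=0) > 1, then the set of ω ∈ Ω satisfying: M1(ω)=M0(ω)=0, Y1(ω)−Y0(ω)=1, Y_{1,M1(ω)}(ω) − Y_{0,M0(ω)}(ω) = 1, Y_{1,M1(ω)}(ω) − Y_{0,M1(ω)}(ω) = 1, Y_{1,M0(ω)}(ω) − Y_{0,M0(ω)}(ω) = 1, Y_{1,M1(ω)}(ω) − Y_{1,M0(ω)}(ω) = 0 and Y_{0,M1(ω)}(ω) − Y_{0,M0(ω)}(ω) = 0, has positive μ-measure. That is, for such ω the total effect, total direct effect, pure direct effect, and principal stratum direct effect (with M1(ω)=M0(ω)=0) all equal 1, while the total indirect and pure indirect effects are both 0. -/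
open MeasureTheory ProbabilityTheory

/-- Conditional probability `P(A | B) = mu(A ∩ B) / mu(B)` as a real number. -/
noncomputable def condP {Ω : Type*} [MeasurableSpace Ω] (μ : Measure Ω)
    (A B : Set Ω) : ℝ :=
  (μ (A ∩ B)).toReal / (μ B).toReal

/-! By randomization and consistency the two observed conditional probabilities are
`μ(Y1 = 1, M1 = 0)` and `μ(Y0 = 0, M0 = 0)`. If they sum to more than one, these two events
meet in a set of positive measure, and there composition forces `Y_{1,0} = 1` and
`Y_{0,0} = 0`, which is every one of the stated effects. -/

section

variable {Ω : Type*} [MeasurableSpace Ω] {μ : Measure Ω}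

lemma condP_congr_left {A A' B : Set Ω} (h : ∀ ω ∈ B, ω ∈ A ↔ ω ∈ A') :
    condP μ A B = condP μ A' B := by
  have hAB : A ∩ B = A' ∩ B := by
    ext ω
    exact ⟨fun ⟨hA, hB⟩ => ⟨(h ω hB).1 hA, hB⟩, fun ⟨hA, hB⟩ => ⟨(h ω hB).2 hA, hB⟩⟩
  rw [condP, condP, hAB]

lemma condP_preimage_eq_of_indepFun [IsFiniteMeasure μ] {α β : Type*} [MeasurableSpace α]
    [MeasurableSpace β] {X : Ω → α} {V : Ω → β} (hXV : IndepFun X V μ) {s : Set α}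
    {t : Set β} (hs : MeasurableSet s) (ht : MeasurableSet t) (hX : μ (X ⁻¹' s) ≠ 0) :
    condP μ (V ⁻¹' t) (X ⁻¹' s) = μ.real (V ⁻¹' t) := by
  have hX' : (μ (X ⁻¹' s)).toReal ≠ 0 := ENNReal.toReal_ne_zero.mpr ⟨hX, measure_ne_top μ _⟩
  rw [condP, Set.inter_comm, hXV.measure_inter_preimage_eq_mul _ _ hs ht, ENNReal.toReal_mul,
    mul_div_cancel_left₀ _ hX', measureReal_def]

lemma measure_ne_zero_of_union_eq_univ [IsProbabilityMeasure μ] {s t : Set Ω}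
    (hst : s ∪ t = Set.univ) (hs : μ s < 1) : μ t ≠ 0 := by
  intro ht
  have hcover := measure_union_le (μ := μ) s t
  rw [hst, measure_univ, ht, add_zero] at hcover
  exact (hcover.trans_lt hs).false

lemma measure_inter_pos_of_one_lt_add [IsProbabilityMeasure μ] {s t : Set Ω}
    (ht : MeasurableSet t) (h : 1 < μ.real s + μ.real t) : 0 < μ (s ∩ t) := by
  rw [← measureReal_union_add_inter ht] at h
  have hunion : μ.real (s ∪ t) ≤ 1 := measureReal_le_one
  have hinter : 0 < μ.real (s ∩ t) := by linarith
  exact ENNReal.toReal_pos_iff.mp hinter |>.1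

end

theorem statement1_general
    {Ω : Type*} [MeasurableSpace Ω] (μ : Measure Ω) [IsProbabilityMeasure μ]
    (Y1 Y0 M1 M0 X Y M : Ω → ℕ)
    (hY0meas : Measurable Y0)
    (hM0meas : Measurable M0)
    (hXbin : ∀ ω, X ω ≤ 1)
    (hXpos : 0 < μ {ω | X ω = 1}) (hXlt : μ {ω | X ω = 1} < 1)
    (hindep : IndepFun X (fun ω => (Y1 ω, Y0 ω, M1 ω, M0 ω)) μ)
    (hYcons1 : ∀ ω, X ω = 1 → Y ω = Y1 ω)
    (hYcons0 : ∀ ω, X ω = 0 → Y ω = Y0 ω)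
    (hMcons1 : ∀ ω, X ω = 1 → M ω = M1 ω)
    (hMcons0 : ∀ ω, X ω = 0 → M ω = M0 ω)
    (Ynest : ℕ → ℕ → Ω → ℕ)
    (hcomp1 : ∀ ω, Ynest 1 (M1 ω) ω = Y1 ω)
    (hcomp0 : ∀ ω, Ynest 0 (M0 ω) ω = Y0 ω)
    (hemp : condP μ {ω | Y ω = 1 ∧ M ω = 0} {ω | X ω = 1}
        + condP μ {ω | Y ω = 0 ∧ M ω = 0} {ω | X ω = 0} > 1) :
    0 < μ {ω | M1 ω = 0 ∧ M0 ω = 0 ∧ (Y1 ω : ℤ) - (Y0 ω : ℤ) = 1 ∧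
      (Ynest 1 (M1 ω) ω : ℤ) - (Ynest 0 (M0 ω) ω : ℤ) = 1 ∧
      (Ynest 1 (M1 ω) ω : ℤ) - (Ynest 0 (M1 ω) ω : ℤ) = 1 ∧
      (Ynest 1 (M0 ω) ω : ℤ) - (Ynest 0 (M0 ω) ω : ℤ) = 1 ∧
      (Ynest 1 (M1 ω) ω : ℤ) - (Ynest 1 (M0 ω) ω : ℤ) = 0 ∧
      (Ynest 0 (M1 ω) ω : ℤ) - (Ynest 0 (M0 ω) ω : ℤ) = 0} := by
  have hX0 : μ {ω | X ω = 0} ≠ 0 :=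
    measure_ne_zero_of_union_eq_univ (Set.eq_univ_of_forall fun ω => by
      have := hXbin ω; simp only [Set.mem_union, Set.mem_ofPred_eq]; omega) hXlt
  have hcond1 : condP μ {ω | Y ω = 1 ∧ M ω = 0} {ω | X ω = 1}
      = μ.real {ω | Y1 ω = 1 ∧ M1 ω = 0} := by
    rw [condP_congr_left (A' := {ω | Y1 ω = 1 ∧ M1 ω = 0})
      fun ω hx => by simp [hYcons1 ω hx, hMcons1 ω hx]]
    exact condP_preimage_eq_of_indepFun (t := {p | p.1 = 1 ∧ p.2.2.1 = 0}) hindep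
      (measurableSet_singleton 1) MeasurableSet.of_discrete hXpos.ne'
  have hcond0 : condP μ {ω | Y ω = 0 ∧ M ω = 0} {ω | X ω = 0}
      = μ.real {ω | Y0 ω = 0 ∧ M0 ω = 0} := by
    rw [condP_congr_left (A' := {ω | Y0 ω = 0 ∧ M0 ω = 0})
      fun ω hx => by simp [hYcons0 ω hx, hMcons0 ω hx]]
    exact condP_preimage_eq_of_indepFun (t := {p | p.2.1 = 0 ∧ p.2.2.2 = 0}) hindep
      (measurableSet_singleton 0) MeasurableSet.of_discrete hX0
  rw [hcond1, hcond0] at hemp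
  refine (measure_inter_pos_of_one_lt_add
    ((hY0meas (measurableSet_singleton 0)).inter (hM0meas (measurableSet_singleton 0)))
    hemp).trans_le (measure_mono ?_)
  rintro ω ⟨⟨hy1, hm1⟩, hy0, hm0⟩
  have h1 := hcomp1 ω
  have h0 := hcomp0 ω
  simp_all

theorem statement1
    {Ω : Type*} [MeasurableSpace Ω] (μ : Measure Ω) [IsProbabilityMeasure μ]
    (Y1 Y0 M1 M0 X Y M : Ω → ℕ)
    (hY1meas : Measurable Y1) (hY0meas : Measurable Y0)
    (hM1meas : Measurable M1) (hM0meas : Measurable M0)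
    (hXmeas : Measurable X)
    (hY1bin : ∀ ω, Y1 ω ≤ 1) (hY0bin : ∀ ω, Y0 ω ≤ 1)
    (hM1bin : ∀ ω, M1 ω ≤ 1) (hM0bin : ∀ ω, M0 ω ≤ 1)
    (hXbin : ∀ ω, X ω ≤ 1)
    (hXpos : 0 < μ {ω | X ω = 1}) (hXlt : μ {ω | X ω = 1} < 1)
    (hindep : IndepFun X (fun ω => (Y1 ω, Y0 ω, M1 ω, M0 ω)) μ)
    (hYcons1 : ∀ ω, X ω = 1 → Y ω = Y1 ω)
    (hYcons0 : ∀ ω, X ω = 0 → Y ω = Y0 ω)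
    (hMcons1 : ∀ ω, X ω = 1 → M ω = M1 ω)
    (hMcons0 : ∀ ω, X ω = 0 → M ω = M0 ω)
    (Ynest : ℕ → ℕ → Ω → ℕ)
    (hYnestmeas : ∀ x m', Measurable (Ynest x m'))
    (hYnestbin : ∀ x m' ω, Ynest x m' ω ≤ 1)
    (hcomp1 : ∀ ω, Ynest 1 (M1 ω) ω = Y1 ω)
    (hcomp0 : ∀ ω, Ynest 0 (M0 ω) ω = Y0 ω)
    (hemp : condP μ {ω | Y ω = 1 ∧ M ω = 0} {ω | X ω = 1}
        + condP μ {ω | Y ω = 0 ∧ M ω = 0} {ω | X ω = 0} > 1) :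
    0 < μ {ω | M1 ω = 0 ∧ M0 ω = 0 ∧ (Y1 ω : ℤ) - (Y0 ω : ℤ) = 1 ∧
      (Ynest 1 (M1 ω) ω : ℤ) - (Ynest 0 (M0 ω) ω : ℤ) = 1 ∧
      (Ynest 1 (M1 ω) ω : ℤ) - (Ynest 0 (M1 ω) ω : ℤ) = 1 ∧
      (Ynest 1 (M0 ω) ω : ℤ) - (Ynest 0 (M0 ω) ω : ℤ) = 1 ∧
      (Ynest 1 (M1 ω) ω : ℤ) - (Ynest 1 (M0 ω) ω : ℤ) = 0 ∧
      (Ynest 0 (M1 ω) ω : ℤ) - (Ynest 0 (M0 ω) ω : ℤ) = 0} :=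
  statement1_general μ Y1 Y0 M1 M0 X Y M hY0meas hM0meas hXbin hXpos hXlt hindep hYcons1 hYcons0
    hMcons1 hMcons0 Ynest hcomp1 hcomp0 hemp
end

section
/- Assume positive monotonicity: M1(ω) ≥ M0(ω) for every ω ∈ Ω. For every y ∈ {0,1} and m ∈ {0,1}: if P(Y=1−y, M=m | X=1−m) > P(Y=1−y, M=m | X=m), then the event {ω ∈ Ω : Y1(ω) = y·m+(1−m)·(1−y), Y0(ω) = (1−y)·m+(1−m)·y, M1(ω)=m, M0(ω)=m} has positive μ-measure (in particular it is nonempty). -/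
/-!
By randomization and consistency, `P(Y = a, M = b | X = x)` is the unconditional probability
`μ(Yₓ = a, Mₓ = b)`. For `m = 0`, monotonicity makes `{Y₁ = 1 - y, M₁ = 0}` a subset of
`{Y₀ = 1 - y, M₀ = 0}` together with the target event, so the assumed strict inequality leaves
positive mass for the target; for `m = 1` the same holds with the roles of the two arms exchanged.
-/

open MeasureTheory ProbabilityTheory

section

variable {Ω : Type*} [MeasurableSpace Ω] {μ : Measure Ω}

theorem measure_pos_of_subset_union_of_lt {A B C : Set Ω} (hsub : B ⊆ C ∪ A)
    (hlt : μ C < μ B) : 0 < μ A := by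
  refine pos_iff_ne_zero.2 fun hA => hlt.not_ge ?_
  calc μ B ≤ μ (C ∪ A) := measure_mono hsub
    _ ≤ μ C + μ A := measure_union_le C A
    _ = μ C := by rw [hA, add_zero]

theorem measure_compl_ne_zero_of_lt_one [IsProbabilityMeasure μ] {s : Set Ω}
    (hs : μ s < 1) : μ sᶜ ≠ 0 := fun hsc => hs.not_ge <|
  calc 1 = μ (s ∪ sᶜ) := by rw [Set.union_compl_self, measure_univ]
    _ ≤ μ s + μ sᶜ := measure_union_le s sᶜ
    _ = μ s := by rw [hsc, add_zero]

theorem condP_preimage_of_indepFun [IsFiniteMeasure μ] {β γ : Type*} [MeasurableSpace β]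
    [MeasurableSpace γ] {X : Ω → β} {Z : Ω → γ} (hind : IndepFun X Z μ) {s : Set β}
    {t : Set γ} (hs : MeasurableSet s) (ht : MeasurableSet t) (hX : μ (X ⁻¹' s) ≠ 0) :
    condP μ (Z ⁻¹' t) (X ⁻¹' s) = (μ (Z ⁻¹' t)).toReal := by
  rw [condP, Set.inter_comm, hind.measure_inter_preimage_eq_mul s t hs ht, ENNReal.toReal_mul,
    mul_div_cancel_left₀]
  exact ENNReal.toReal_ne_zero.2 ⟨hX, measure_ne_top μ _⟩

theorem condP_observed_eq_potential [IsFiniteMeasure μ] {ι α β : Type*} [MeasurableSpace ι]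
    [MeasurableSingletonClass ι] [MeasurableSpace α] [MeasurableSingletonClass α]
    [MeasurableSpace β] [MeasurableSingletonClass β] {X : Ω → ι} {Y Yx : Ω → α} {M Mx : Ω → β}
    {x : ι} (hind : IndepFun X (fun ω => (Yx ω, Mx ω)) μ) (hX : μ {ω | X ω = x} ≠ 0)
    (hY : ∀ ω, X ω = x → Y ω = Yx ω) (hM : ∀ ω, X ω = x → M ω = Mx ω) (a : α) (b : β) :
    condP μ {ω | Y ω = a ∧ M ω = b} {ω | X ω = x} = (μ {ω | Yx ω = a ∧ Mx ω = b}).toReal := by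
  have hcons : {ω | Y ω = a ∧ M ω = b} ∩ {ω | X ω = x}
      = {ω | Yx ω = a ∧ Mx ω = b} ∩ {ω | X ω = x} := by
    ext ω
    by_cases hx : X ω = x <;> simp [hx, hY ω, hM ω]
  rw [condP, hcons, ← condP]
  exact condP_preimage_of_indepFun hind (measurableSet_singleton x)
    ((measurableSet_singleton a).prod (measurableSet_singleton b)) hX

end

theorem statement5_general
    {Ω : Type*} [MeasurableSpace Ω] (μ : Measure Ω) [IsProbabilityMeasure μ]
    (Y1 Y0 M1 M0 X Y M : Ω → ℕ)
    (hY1bin : ∀ ω, Y1 ω ≤ 1) (hY0bin : ∀ ω, Y0 ω ≤ 1)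
    (hM1bin : ∀ ω, M1 ω ≤ 1)
    (hXbin : ∀ ω, X ω ≤ 1)
    (hXpos : 0 < μ {ω | X ω = 1}) (hXlt : μ {ω | X ω = 1} < 1)
    (hindep : IndepFun X (fun ω => (Y1 ω, Y0 ω, M1 ω, M0 ω)) μ)
    (hYcons1 : ∀ ω, X ω = 1 → Y ω = Y1 ω)
    (hYcons0 : ∀ ω, X ω = 0 → Y ω = Y0 ω)
    (hMcons1 : ∀ ω, X ω = 1 → M ω = M1 ω)
    (hMcons0 : ∀ ω, X ω = 0 → M ω = M0 ω)
    (hmono : ∀ ω, M0 ω ≤ M1 ω)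
    (y m : ℕ) (hy : y ≤ 1) (hm : m ≤ 1)
    (hemp : condP μ {ω | Y ω = 1 - y ∧ M ω = m} {ω | X ω = 1 - m}
        > condP μ {ω | Y ω = 1 - y ∧ M ω = m} {ω | X ω = m}) :
    0 < μ {ω | Y1 ω = y * m + (1 - m) * (1 - y) ∧ Y0 ω = (1 - y) * m + (1 - m) * y ∧
          M1 ω = m ∧ M0 ω = m} ∧
      {ω | Y1 ω = y * m + (1 - m) * (1 - y) ∧ Y0 ω = (1 - y) * m + (1 - m) * y ∧
          M1 ω = m ∧ M0 ω = m}.Nonempty := by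
  have hX0 : μ {ω | X ω = 0} ≠ 0 := by
    have hcompl : {ω | X ω = 0} = {ω | X ω = 1}ᶜ := by
      ext ω; have := hXbin ω; simp only [Set.mem_ofPred_eq, Set.mem_compl_iff]; omega
    exact hcompl ▸ measure_compl_ne_zero_of_lt_one hXlt
  have hind1 : IndepFun X (fun ω => (Y1 ω, M1 ω)) μ :=
    hindep.comp measurable_id (by fun_prop : Measurable fun p : ℕ × ℕ × ℕ × ℕ => (p.1, p.2.2.1))
  have hind0 : IndepFun X (fun ω => (Y0 ω, M0 ω)) μ :=
    hindep.comp measurable_id (by fun_prop : Measurable fun p : ℕ × ℕ × ℕ × ℕ => (p.2.1, p.2.2.2))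
  have hobs1 := condP_observed_eq_potential hind1 hXpos.ne' hYcons1 hMcons1
  have hobs0 := condP_observed_eq_potential hind0 hX0 hYcons0 hMcons0
  suffices hpos : 0 < μ {ω | Y1 ω = y * m + (1 - m) * (1 - y) ∧
      Y0 ω = (1 - y) * m + (1 - m) * y ∧ M1 ω = m ∧ M0 ω = m} from
    ⟨hpos, nonempty_of_measure_ne_zero hpos.ne'⟩
  obtain rfl | rfl : m = 0 ∨ m = 1 := by omega
  · rw [Nat.sub_zero, hobs1, hobs0, gt_iff_lt,
      ENNReal.toReal_lt_toReal (measure_ne_top μ _) (measure_ne_top μ _)] at hemp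
    refine measure_pos_of_subset_union_of_lt (fun ω hω => ?_) hemp
    have := hY0bin ω; have := hmono ω
    simp only [Set.mem_ofPred_eq, Set.mem_union] at hω ⊢
    omega
  · rw [Nat.sub_self, hobs1, hobs0, gt_iff_lt,
      ENNReal.toReal_lt_toReal (measure_ne_top μ _) (measure_ne_top μ _)] at hemp
    refine measure_pos_of_subset_union_of_lt (fun ω hω => ?_) hemp
    have := hY1bin ω; have := hM1bin ω; have := hmono ω
    simp only [Set.mem_ofPred_eq, Set.mem_union] at hω ⊢
    omega

theorem statement5
    {Ω : Type*} [MeasurableSpace Ω] (μ : Measure Ω) [IsProbabilityMeasure μ]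
    (Y1 Y0 M1 M0 X Y M : Ω → ℕ)
    (hY1meas : Measurable Y1) (hY0meas : Measurable Y0)
    (hM1meas : Measurable M1) (hM0meas : Measurable M0)
    (hXmeas : Measurable X)
    (hY1bin : ∀ ω, Y1 ω ≤ 1) (hY0bin : ∀ ω, Y0 ω ≤ 1)
    (hM1bin : ∀ ω, M1 ω ≤ 1) (hM0bin : ∀ ω, M0 ω ≤ 1)
    (hXbin : ∀ ω, X ω ≤ 1)
    (hXpos : 0 < μ {ω | X ω = 1}) (hXlt : μ {ω | X ω = 1} < 1)
    (hindep : IndepFun X (fun ω => (Y1 ω, Y0 ω, M1 ω, M0 ω)) μ)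
    (hYcons1 : ∀ ω, X ω = 1 → Y ω = Y1 ω)
    (hYcons0 : ∀ ω, X ω = 0 → Y ω = Y0 ω)
    (hMcons1 : ∀ ω, X ω = 1 → M ω = M1 ω)
    (hMcons0 : ∀ ω, X ω = 0 → M ω = M0 ω)
    (hmono : ∀ ω, M0 ω ≤ M1 ω)
    (y m : ℕ) (hy : y ≤ 1) (hm : m ≤ 1)
    (hemp : condP μ {ω | Y ω = 1 - y ∧ M ω = m} {ω | X ω = 1 - m}
        > condP μ {ω | Y ω = 1 - y ∧ M ω = m} {ω | X ω = m}) :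
    0 < μ {ω | Y1 ω = y * m + (1 - m) * (1 - y) ∧ Y0 ω = (1 - y) * m + (1 - m) * y ∧
          M1 ω = m ∧ M0 ω = m} ∧
      {ω | Y1 ω = y * m + (1 - m) * (1 - y) ∧ Y0 ω = (1 - y) * m + (1 - m) * y ∧
          M1 ω = m ∧ M0 ω = m}.Nonempty :=
  statement5_general μ Y1 Y0 M1 M0 X Y M hY1bin hY0bin hM1bin hXbin hXpos hXlt hindep hYcons1
    hYcons0 hMcons1 hMcons0 hmono y m hy hm hemp
end
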